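/- Let (Ω, 𝓕, P) be a probability space, let ℓ ≥ 1, N ≥ 1, ε_m ≥ 0, let U_1, …, U_N be fixed nonzero ℓ×ℓ real matrices, and let Ũ_1, …, Ũ_N : Ω → M_ℓ(ℝ) be independent measurable random matrices with finite second-moment norms. Suppose that for every p: (i) E[(‖U_p − Ũ_p‖/‖U_p‖)²] ≤ ℓ ε_m² (machine-error condition), and (ii) E[(‖Ũ_p‖/‖U_p‖)²] ≤ 1 + 1/N (normalization condition). Then the relative error ε := ‖U_N ⋯ U_1 − Ũ_N ⋯ Ũ_1‖ / (∏_{p=1}^{N} ‖U_p‖) satisfies √(E[ε²]) ≤ N ε_m √(e·ℓ); in particular its standard deviation satisfies σ(ε) ≤ N ε_m √(e·ℓ), i.e. it grows at most linearly in N. -/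

import Mathlib

/-!
Let `εₙ` be the relative error after `n` factors. From
`Uₙ⋯U₁ − Ũₙ⋯Ũ₁ = Ũₙ (Uₙ₋₁⋯U₁ − Ũₙ₋₁⋯Ũ₁) + (Uₙ − Ũₙ) Uₙ₋₁⋯U₁` and submultiplicativity,
`εₙ ≤ aₙ εₙ₋₁ + mₙ` pointwise, where `aₙ = ‖Ũₙ‖/‖Uₙ‖` and `mₙ = ‖Uₙ − Ũₙ‖/‖Uₙ‖`.
As `aₙ` is independent of `εₙ₋₁`, a function of the earlier factors, the L² norm of `aₙ εₙ₋₁`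
factors, and Minkowski's inequality gives `‖εₙ‖₂ ≤ A ‖εₙ₋₁‖₂ + b` with `A = √(1 + 1/N)`,
`b = √ℓ εₘ`. Hence `‖ε_N‖₂ ≤ N A^N b ≤ N √e √ℓ εₘ` because `(1 + 1/N)^N ≤ e`, and the standard
deviation is at most the L² norm.
-/

open MeasureTheory ProbabilityTheory
open scoped Matrix.Norms.L2Operator

/-- Matrices inherit the product measurable-space structure (entrywise). -/
instance matrixMeasurableSpace {l : ℕ} : MeasurableSpace (Matrix (Fin l) (Fin l) ℝ) :=
  inferInstanceAs (MeasurableSpace ((Fin l) → (Fin l) → ℝ))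

/-- The ordered product `U_{n} U_{n-1} ⋯ U_1` of matrices (written with 0-based
indices), where the factor with the largest index acts last (leftmost). -/
noncomputable def mprod {l : ℕ} (U : ℕ → Matrix (Fin l) (Fin l) ℝ) :
    ℕ → Matrix (Fin l) (Fin l) ℝ
  | 0 => 1
  | n + 1 => U n * mprod U n

instance matrixBorelSpace {l : ℕ} : BorelSpace (Matrix (Fin l) (Fin l) ℝ) :=
  inferInstanceAs (BorelSpace ((Fin l) → (Fin l) → ℝ))

section MatrixProduct

variable {l : ℕ}

lemma mprod_congr {U W : ℕ → Matrix (Fin l) (Fin l) ℝ} {n : ℕ} (h : ∀ p < n, U p = W p) :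
    mprod U n = mprod W n := by
  induction n with
  | zero => rfl
  | succ n ih =>
    rw [mprod, mprod, h n n.lt_succ_self, ih fun p hp => h p (hp.trans n.lt_succ_self)]

lemma norm_mprod_le (U : ℕ → Matrix (Fin l) (Fin l) ℝ) (n : ℕ) :
    ‖mprod U n‖ ≤ ∏ p ∈ Finset.range n, ‖U p‖ := by
  induction n with
  | zero =>
    rcases subsingleton_or_nontrivial (Matrix (Fin l) (Fin l) ℝ) with h | h
    · simp [mprod, Subsingleton.elim (1 : Matrix (Fin l) (Fin l) ℝ) 0]
    · simp [mprod]
  | succ n ih =>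
    rw [mprod, Finset.prod_range_succ, mul_comm _ ‖U n‖]
    exact (norm_mul_le _ _).trans (mul_le_mul_of_nonneg_left ih (norm_nonneg _))

lemma mprod_succ_sub_mprod_succ (U W : ℕ → Matrix (Fin l) (Fin l) ℝ) (n : ℕ) :
    mprod U (n + 1) - mprod W (n + 1) =
      W n * (mprod U n - mprod W n) + (U n - W n) * mprod U n := by
  simp only [mprod, mul_sub, sub_mul]
  abel

lemma measurable_mprod {X : Type*} [MeasurableSpace X] {W : ℕ → X → Matrix (Fin l) (Fin l) ℝ}
    {n : ℕ} (hW : ∀ p < n, Measurable (W p)) : Measurable fun x => mprod (fun p => W p x) n := by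
  induction n with
  | zero => exact measurable_const
  | succ n ih =>
    exact (hW n n.lt_succ_self).mul (ih fun p hp => hW p (hp.trans n.lt_succ_self))

noncomputable def relError (U W : ℕ → Matrix (Fin l) (Fin l) ℝ) (n : ℕ) : ℝ :=
  ‖mprod U n - mprod W n‖ / ∏ p ∈ Finset.range n, ‖U p‖

lemma relError_nonneg (U W : ℕ → Matrix (Fin l) (Fin l) ℝ) (n : ℕ) : 0 ≤ relError U W n :=
  div_nonneg (norm_nonneg _) (Finset.prod_nonneg fun _ _ => norm_nonneg _)

@[simp]
lemma relError_zero (U W : ℕ → Matrix (Fin l) (Fin l) ℝ) : relError U W 0 = 0 := by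
  simp [relError, mprod]

lemma relError_succ_le (U W : ℕ → Matrix (Fin l) (Fin l) ℝ) (n : ℕ) :
    relError U W (n + 1) ≤
      ‖W n‖ / ‖U n‖ * relError U W n + ‖U n - W n‖ / ‖U n‖ := by
  have hrhs : 0 ≤ ‖W n‖ / ‖U n‖ * relError U W n + ‖U n - W n‖ / ‖U n‖ := by
    have := relError_nonneg U W n
    positivity
  rcases (mul_nonneg (Finset.prod_nonneg fun p _ => norm_nonneg (U p))
    (norm_nonneg (U n))).eq_or_lt with hzero | hpos
  · -- a vanishing `‖U p‖` makes the left side `x / 0 = 0`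
    rwa [relError, Finset.prod_range_succ, ← hzero, div_zero]
  have hK : 0 < ∏ p ∈ Finset.range n, ‖U p‖ := pos_of_mul_pos_left hpos (norm_nonneg _)
  have hUn : 0 < ‖U n‖ := pos_of_mul_pos_right hpos hK.le
  have hsplit : ‖mprod U (n + 1) - mprod W (n + 1)‖ ≤
      ‖W n‖ * ‖mprod U n - mprod W n‖ + ‖U n - W n‖ * ∏ p ∈ Finset.range n, ‖U p‖ := by
    rw [mprod_succ_sub_mprod_succ]
    refine (norm_add_le _ _).trans (add_le_add (norm_mul_le _ _) ?_)
    exact (norm_mul_le _ _).trans (mul_le_mul_of_nonneg_left (norm_mprod_le U n) (norm_nonneg _))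
  rw [relError, relError, Finset.prod_range_succ, div_le_iff₀ hpos]
  refine hsplit.trans (le_of_eq ?_)
  field_simp

lemma measurable_relError {X : Type*} [MeasurableSpace X] (U : ℕ → Matrix (Fin l) (Fin l) ℝ)
    {W : ℕ → X → Matrix (Fin l) (Fin l) ℝ} {n : ℕ} (hW : ∀ p < n, Measurable (W p)) :
    Measurable fun x => relError U (fun p => W p x) n :=
  (measurable_const.sub (measurable_mprod hW)).norm.div_const _

end MatrixProduct

section SecondMoment

variable {Ω : Type*} [MeasurableSpace Ω] {P : Measure Ω}

lemma sqrt_integral_sq_eq_toReal_eLpNorm {f : Ω → ℝ} (hf : MemLp f 2 P) :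
    √(∫ ω, f ω ^ 2 ∂P) = (eLpNorm f 2 P).toReal := by
  rw [hf.eLpNorm_eq_integral_rpow_norm two_ne_zero ENNReal.ofNat_ne_top,
    ENNReal.toReal_ofReal (by positivity), Real.sqrt_eq_rpow]
  simp

lemma sqrt_integral_sq_le_add {X f g : Ω → ℝ} (hX : AEStronglyMeasurable X P)
    (hf : MemLp f 2 P) (hg : MemLp g 2 P) (hle : ∀ ω, ‖X ω‖ ≤ f ω + g ω) :
    MemLp X 2 P ∧ √(∫ ω, X ω ^ 2 ∂P) ≤ √(∫ ω, f ω ^ 2 ∂P) + √(∫ ω, g ω ^ 2 ∂P) := by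
  have hX2 : MemLp X 2 P :=
    (hf.add hg).of_le hX (ae_of_all _ fun ω => (hle ω).trans (le_abs_self _))
  refine ⟨hX2, ?_⟩
  rw [sqrt_integral_sq_eq_toReal_eLpNorm hX2, sqrt_integral_sq_eq_toReal_eLpNorm hf,
    sqrt_integral_sq_eq_toReal_eLpNorm hg, ← ENNReal.toReal_add hf.eLpNorm_ne_top
    hg.eLpNorm_ne_top]
  refine ENNReal.toReal_mono (by finiteness) ?_
  exact (eLpNorm_mono_real hle).trans (eLpNorm_add_le hf.1 hg.1 one_le_two)

lemma ProbabilityTheory.IndepFun.sqrt_integral_mul_sq {f g : Ω → ℝ} (hfg : IndepFun f g P)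
    (hf : MemLp f 2 P) (hg : MemLp g 2 P) :
    MemLp (f * g) 2 P ∧
      √(∫ ω, (f ω * g ω) ^ 2 ∂P) = √(∫ ω, f ω ^ 2 ∂P) * √(∫ ω, g ω ^ 2 ∂P) := by
  have hsq : IndepFun (fun ω => f ω ^ 2) (fun ω => g ω ^ 2) P :=
    hfg.comp (measurable_id.pow_const 2) (measurable_id.pow_const 2)
  refine ⟨(memLp_two_iff_integrable_sq (hf.1.mul hg.1)).2 ?_, ?_⟩
  · simpa only [Pi.mul_def, mul_pow] using hsq.integrable_mul hf.integrable_sq hg.integrable_sq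
  · simp_rw [mul_pow]
    rw [← Real.sqrt_mul (integral_nonneg fun ω => sq_nonneg _)]
    exact congrArg _ (hsq.integral_mul_eq_mul_integral hf.integrable_sq.1 hg.integrable_sq.1)

end SecondMoment

section RandomProduct

variable {Ω : Type*} [MeasurableSpace Ω] {P : Measure Ω} {l N : ℕ}
  {V : ℕ → Ω → Matrix (Fin l) (Fin l) ℝ}

lemma ProbabilityTheory.iIndepFun.indepFun_mprod (hVmeas : ∀ p < N, Measurable (V p))
    (hindep : iIndepFun (fun p : Fin N => V p.1) P) {n : ℕ} (hn : n < N) :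
    IndepFun (V n) (fun ω => mprod (fun p => V p ω) n) P := by
  set i : Fin N := ⟨n, hn⟩
  have hpast := hindep.indepFun_finset {i} (Finset.Iio i) (by simp)
    fun j => hVmeas j.1 j.2
  -- the product of the first `n` factors as a function of the tuple `(V p)_{p < n}`
  have hprod : Measurable fun v : Finset.Iio i → Matrix (Fin l) (Fin l) ℝ =>
      mprod (fun p => if h : p < n then v ⟨⟨p, h.trans hn⟩, by simpa [i]⟩ else 1) n :=
    measurable_mprod fun p hp => by simpa only [dif_pos hp] using measurable_pi_apply _
  convert hpast.comp (measurable_pi_apply ⟨i, Finset.mem_singleton_self i⟩) hprod using 1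
  exacts [rfl, funext fun ω => mprod_congr fun p hp => by rw [dif_pos hp]]

theorem sqrt_integral_relError_sq_le [IsFiniteMeasure P] (U : ℕ → Matrix (Fin l) (Fin l) ℝ)
    {A b : ℝ} (hA : 1 ≤ A)
    (hVmeas : ∀ p < N, Measurable (V p))
    (hVL2 : ∀ p < N, MemLp (fun ω => ‖V p ω‖) 2 P)
    (hindep : iIndepFun (fun p : Fin N => V p.1) P)
    (herr : ∀ p < N, √(∫ ω, (‖U p - V p ω‖ / ‖U p‖) ^ 2 ∂P) ≤ b)
    (hnorm : ∀ p < N, √(∫ ω, (‖V p ω‖ / ‖U p‖) ^ 2 ∂P) ≤ A) {n : ℕ} (hn : n ≤ N) :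
    MemLp (fun ω => relError U (fun p => V p ω) n) 2 P ∧
      √(∫ ω, relError U (fun p => V p ω) n ^ 2 ∂P) ≤ n * A ^ n * b := by
  induction n with
  | zero => simp
  | succ n ih =>
    obtain ⟨hε, hεb⟩ := ih (Nat.le_of_succ_le hn)
    have hnN : n < N := hn
    have hV : MemLp (V n) 2 P := (memLp_norm_iff (hVmeas n hnN).aestronglyMeasurable).1 (hVL2 n hnN)
    have hgrowth : MemLp (fun ω => ‖V n ω‖ / ‖U n‖) 2 P := by
      simpa only [div_eq_mul_inv] using (hVL2 n hnN).mul_const _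
    have hdefect : MemLp (fun ω => ‖U n - V n ω‖ / ‖U n‖) 2 P := by
      simpa only [div_eq_mul_inv, Pi.sub_apply] using ((memLp_const (U n)).sub hV).norm.mul_const _
    have hindep_n : IndepFun (fun ω => ‖V n ω‖ / ‖U n‖)
        (fun ω => relError U (fun p => V p ω) n) P :=
      (hindep.indepFun_mprod hVmeas hnN).comp (measurable_norm.div_const _)
        ((measurable_const.sub measurable_id).norm.div_const _)
    obtain ⟨hprod, hprod_eq⟩ := hindep_n.sqrt_integral_mul_sq hgrowth hε
    obtain ⟨hε', hε'b⟩ := sqrt_integral_sq_le_add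
      (measurable_relError U fun p hp => hVmeas p (hp.trans_le hn)).aestronglyMeasurable
      hprod hdefect fun ω => by
        rw [Real.norm_of_nonneg (relError_nonneg _ _ _)]
        exact relError_succ_le _ _ n
    refine ⟨hε', hε'b.trans ?_⟩
    have hb : 0 ≤ b := (Real.sqrt_nonneg _).trans (herr n hnN)
    have hbA : b ≤ A ^ (n + 1) * b := le_mul_of_one_le_left hb (one_le_pow₀ hA)
    rw [Pi.mul_def, hprod_eq]
    calc √(∫ ω, (‖V n ω‖ / ‖U n‖) ^ 2 ∂P) * √(∫ ω, relError U (fun p => V p ω) n ^ 2 ∂P)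
          + √(∫ ω, (‖U n - V n ω‖ / ‖U n‖) ^ 2 ∂P)
        ≤ A * (n * A ^ n * b) + b :=
          add_le_add (mul_le_mul (hnorm n hnN) hεb (Real.sqrt_nonneg _) (by linarith)) (herr n hnN)
      _ ≤ (n + 1 : ℕ) * A ^ (n + 1) * b := by
          push_cast
          linear_combination hbA

end RandomProduct

lemma sqrt_one_add_one_div_pow_le (n : ℕ) : √(1 + 1 / (n : ℝ)) ^ n ≤ √(Real.exp 1) := by
  rw [Real.le_sqrt (by positivity) (Real.exp_pos 1).le, ← pow_mul, mul_comm, pow_mul,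
    Real.sq_sqrt (by positivity), one_div]
  exact Real.one_add_inv_pow_le_exp

theorem normalized_random_product_error_general {Ω : Type*} [MeasurableSpace Ω]
    (P : Measure Ω) [IsProbabilityMeasure P]
    {l N : ℕ} (εm : ℝ) (hεm : 0 ≤ εm)
    (U : ℕ → Matrix (Fin l) (Fin l) ℝ)
    (V : ℕ → Ω → Matrix (Fin l) (Fin l) ℝ)
    (hVmeas : ∀ p < N, Measurable (V p))
    (hVL2 : ∀ p < N, MemLp (fun ω => ‖V p ω‖) 2 P)
    (hindep : iIndepFun (fun p : Fin N => V p.1) P)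
    (herr : ∀ p < N, ∫ ω, (‖U p - V p ω‖ / ‖U p‖) ^ 2 ∂P ≤ (l : ℝ) * εm ^ 2)
    (hnorm : ∀ p < N, ∫ ω, (‖V p ω‖ / ‖U p‖) ^ 2 ∂P ≤ 1 + 1 / (N : ℝ)) :
    Real.sqrt (∫ ω,
        (‖mprod U N - mprod (fun p => V p ω) N‖ / ∏ p ∈ Finset.range N, ‖U p‖) ^ 2 ∂P) ≤
          (N : ℝ) * εm * Real.sqrt (Real.exp 1 * l) ∧
      Real.sqrt (variance
        (fun ω => ‖mprod U N - mprod (fun p => V p ω) N‖ / ∏ p ∈ Finset.range N, ‖U p‖) P) ≤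
          (N : ℝ) * εm * Real.sqrt (Real.exp 1 * l) := by
  have herr_sqrt : ∀ p < N, √(∫ ω, (‖U p - V p ω‖ / ‖U p‖) ^ 2 ∂P) ≤ √l * εm := fun p hp => by
    rw [← Real.sqrt_sq hεm, ← Real.sqrt_mul (Nat.cast_nonneg l)]
    exact Real.sqrt_le_sqrt (herr p hp)
  obtain ⟨hmem, hbound⟩ := sqrt_integral_relError_sq_le U
    (Real.one_le_sqrt.2 (le_add_of_nonneg_right (by positivity))) hVmeas hVL2 hindep herr_sqrt
    (fun p hp => Real.sqrt_le_sqrt (hnorm p hp)) le_rfl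
  have hconst : (N : ℝ) * √(1 + 1 / (N : ℝ)) ^ N * (√l * εm) ≤
      N * εm * √(Real.exp 1 * l) := by
    rw [Real.sqrt_mul (Real.exp_pos 1).le]
    have := mul_le_mul_of_nonneg_left (sqrt_one_add_one_div_pow_le N)
      (by positivity : (0 : ℝ) ≤ N * εm * √l)
    linarith
  have hsecond := hbound.trans hconst
  exact ⟨hsecond, (Real.sqrt_le_sqrt (variance_le_expectation_sq hmem.1)).trans hsecond⟩

/-- On a probability space `(Ω, 𝓕, P)`, with `ℓ ≥ 1`, `N ≥ 1`,
`ε_m ≥ 0`, fixed nonzero `ℓ×ℓ` real matrices `U_1, …, U_N`, and independent measurable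
random matrices `Ũ_1, …, Ũ_N : Ω → M_ℓ(ℝ)` whose spectral norms have finite second
moments, suppose that for every `p`:
(i) `E[(‖U_p − Ũ_p‖/‖U_p‖)²] ≤ ℓ ε_m²` (machine-error condition), and
(ii) `E[(‖Ũ_p‖/‖U_p‖)²] ≤ 1 + 1/N` (normalization condition).
Then the relative error `ε := ‖U_N ⋯ U_1 − Ũ_N ⋯ Ũ_1‖ / ∏_p ‖U_p‖` satisfies
`√(E[ε²]) ≤ N ε_m √(e·ℓ)`; in particular its standard deviation satisfies
`σ(ε) ≤ N ε_m √(e·ℓ)`, i.e. it grows at most linearly in `N`. -/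
theorem normalized_random_product_error {Ω : Type*} [MeasurableSpace Ω]
    (P : Measure Ω) [IsProbabilityMeasure P]
    {l N : ℕ} (hl : 1 ≤ l) (hN : 1 ≤ N) (εm : ℝ) (hεm : 0 ≤ εm)
    (U : ℕ → Matrix (Fin l) (Fin l) ℝ) (hU : ∀ p < N, U p ≠ 0)
    (V : ℕ → Ω → Matrix (Fin l) (Fin l) ℝ)
    (hVmeas : ∀ p < N, Measurable (V p))
    (hVL2 : ∀ p < N, MemLp (fun ω => ‖V p ω‖) 2 P)
    (hindep : iIndepFun (fun p : Fin N => V p.1) P)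
    (herr : ∀ p < N, ∫ ω, (‖U p - V p ω‖ / ‖U p‖) ^ 2 ∂P ≤ (l : ℝ) * εm ^ 2)
    (hnorm : ∀ p < N, ∫ ω, (‖V p ω‖ / ‖U p‖) ^ 2 ∂P ≤ 1 + 1 / (N : ℝ)) :
    Real.sqrt (∫ ω,
        (‖mprod U N - mprod (fun p => V p ω) N‖ / ∏ p ∈ Finset.range N, ‖U p‖) ^ 2 ∂P) ≤
          (N : ℝ) * εm * Real.sqrt (Real.exp 1 * l) ∧
      Real.sqrt (variance
        (fun ω => ‖mprod U N - mprod (fun p => V p ω) N‖ / ∏ p ∈ Finset.range N, ‖U p‖) P) ≤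
          (N : ℝ) * εm * Real.sqrt (Real.exp 1 * l) :=
  normalized_random_product_error_general P εm hεm U V hVmeas hVL2 hindep herr hnorm
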